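/- Let n' be a positive natural number, K, K' positive natural numbers, s : Fin n' → Fin K' a labeling, and h : Fin n' → Fin K a surjective partition assignment. Then the category utility function attains its maximum value, U_c = 1 − Σ_{j=1}^{K'} (p_{+j})², if and only if every cluster of h is pure with respect to s, i.e., for all i, i' : Fin n', h i = h i' implies s i = s i'. -/

import Mathlib

/-! The contribution `p_{k+} Σ_j (p_{kj} / p_{k+})²` of cluster `k` equals `Σ_j p_{kj}² / p_{k+}`,
which is at most `p_{k+} = Σ_j p_{kj}` since `Σ_j q_j² ≤ (Σ_j q_j)²` for nonnegative `q`, with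
equality exactly when at most one `q_j` is nonzero. As the `p_{k+}` add up to `1`, summing over
the clusters gives `U_c ≤ 1 − Σ_j p_{+j}²`, with equality iff every cluster meets a single class. -/

open Finset Function

theorem Finset.sum_sq_eq_sq_sum_iff_subsingleton_support {ι R : Type*} [Fintype ι] [CommRing R]
    [LinearOrder R] [IsStrictOrderedRing R] {f : ι → R} (hf : ∀ i, 0 ≤ f i) :
    ∑ i, f i ^ 2 = (∑ i, f i) ^ 2 ↔ (support f).Subsingleton := by
  constructor
  · intro heq i hi j hj
    by_contra hij
    have hle : ∀ a ∈ univ, f a ^ 2 ≤ f a * ∑ b, f b := fun a _ => by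
      rw [sq]
      exact mul_le_mul_of_nonneg_left (single_le_sum (fun b _ => hf b) (mem_univ a)) (hf a)
    have heq' : ∑ a, f a ^ 2 = ∑ a, f a * ∑ b, f b := by rw [heq, ← sum_mul, sq]
    -- equality forces `f i ^ 2 = f i * ∑ f`, so a nonzero `f i` carries the whole sum
    have hfi : f i = ∑ b, f b :=
      mul_left_cancel₀ hi (by rw [← sq]; exact (sum_eq_sum_iff_of_le hle).1 heq' i (mem_univ i))
    have := add_le_sum (fun b _ => hf b) (mem_univ i) (mem_univ j) hij
    exact hj (le_antisymm (by linarith) (hf j))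
  · intro hsub
    rcases (support f).eq_empty_or_nonempty with hempty | ⟨i, hi⟩
    · simp [support_eq_empty_iff.1 hempty]
    · have hzero : ∀ j ∈ univ, j ≠ i → f j = 0 := fun j _ hji =>
        notMem_support.1 fun hj => hji (hsub hj hi)
      rw [sum_eq_single i (fun j hj hji => by simp [hzero j hj hji]) (by simp),
        sum_eq_single i hzero (by simp)]

section ClusterContribution

variable {ι 𝕜 : Type*} [Fintype ι] [Field 𝕜]

theorem mul_sum_div_sq (q : ι → 𝕜) (p : 𝕜) : p * ∑ j, (q j / p) ^ 2 = (∑ j, q j ^ 2) / p := by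
  rcases eq_or_ne p 0 with rfl | hp
  · simp
  · simp only [div_pow, ← sum_div]
    field_simp

variable [LinearOrder 𝕜] [IsStrictOrderedRing 𝕜]

theorem sum_mul_sum_div_sum_sq_le {q : ι → 𝕜} (hq : ∀ j, 0 ≤ q j) :
    (∑ j, q j) * ∑ j, (q j / ∑ j, q j) ^ 2 ≤ ∑ j, q j := by
  rcases (sum_nonneg fun j _ => hq j).eq_or_lt with hp | hp
  · rw [← hp, zero_mul]
  · rw [mul_sum_div_sq, div_le_iff₀ hp, ← sq]
    exact sum_sq_le_sq_sum_of_nonneg fun j _ => hq j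

theorem sum_mul_sum_div_sum_sq_eq_sum_iff {q : ι → 𝕜} (hq : ∀ j, 0 ≤ q j) :
    (∑ j, q j) * ∑ j, (q j / ∑ j, q j) ^ 2 = ∑ j, q j ↔ (support q).Subsingleton := by
  rcases (sum_nonneg fun j _ => hq j).eq_or_lt with hp | hp
  · have hzero : q = 0 := funext fun j =>
      (sum_eq_zero_iff_of_nonneg fun j _ => hq j).1 hp.symm j (mem_univ j)
    simp [hzero]
  · rw [mul_sum_div_sq, div_eq_iff hp.ne', ← sq, sum_sq_eq_sq_sum_iff_subsingleton_support hq]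

end ClusterContribution

section Counting

variable {α β γ : Type*} [Fintype α] [DecidableEq β] [DecidableEq γ] (h : α → β) (s : α → γ)

theorem card_filter_eq_sum_card_filter_and [Fintype γ] (k : β) :
    #{i | h i = k} = ∑ j, #{i | h i = k ∧ s i = j} := by
  rw [card_eq_sum_card_fiberwise (f := s) (t := univ) fun i _ => mem_univ _]
  simp only [filter_filter]

theorem sum_card_filter_eq_card [Fintype β] : ∑ k, #{i | h i = k} = Fintype.card α :=
  (card_eq_sum_card_fiberwise fun i _ => mem_univ (h i)).symm

theorem pure_iff_subsingleton_support_card_filter :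
    (∀ i i', h i = h i' → s i = s i') ↔
      ∀ k, (support fun j => #{i | h i = k ∧ s i = j}).Subsingleton := by
  simp only [Set.Subsingleton, mem_support, ne_eq, card_eq_zero, filter_eq_empty_iff, mem_univ,
    true_implies, not_forall, not_not]
  constructor
  · rintro hpure k _ ⟨i, hik, rfl⟩ _ ⟨i', hi'k, rfl⟩
    exact hpure i i' (hik.trans hi'k.symm)
  · intro hpure i i' hii'
    exact hpure (h i) ⟨i, rfl, rfl⟩ ⟨i', hii'.symm, rfl⟩

end Counting

theorem category_utility_max_iff_pure_clusters_general
    (n' K K' : ℕ) (hn' : 0 < n')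
    (s : Fin n' → Fin K') (h : Fin n' → Fin K)
    (nkj : Fin K → Fin K' → ℕ)
    (hnkj : ∀ k j, nkj k j = (Finset.univ.filter (fun i => h i = k ∧ s i = j)).card)
    (nk : Fin K → ℕ)
    (hnk : ∀ k, nk k = (Finset.univ.filter (fun i => h i = k)).card)
    (pkj : Fin K → Fin K' → ℝ)
    (hpkj : ∀ k j, pkj k j = (nkj k j : ℝ) / (n' : ℝ))
    (pk : Fin K → ℝ)
    (hpk : ∀ k, pk k = (nk k : ℝ) / (n' : ℝ))
    (pj : Fin K' → ℝ)
    (Uc : ℝ)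
    (hUc : Uc = (∑ k, pk k * ∑ j, (pkj k j / pk k) ^ 2) - ∑ j, (pj j) ^ 2) :
    Uc = 1 - ∑ j, (pj j) ^ 2 ↔ ∀ i i' : Fin n', h i = h i' → s i = s i' := by
  have hn : (n' : ℝ) ≠ 0 := by positivity
  have hpkj_nonneg : ∀ k j, 0 ≤ pkj k j := fun k j => by rw [hpkj]; positivity
  have hpk_sum : ∀ k, pk k = ∑ j, pkj k j := fun k => by
    simp only [hpk, hpkj, ← sum_div, hnk, hnkj, card_filter_eq_sum_card_filter_and h s,
      Nat.cast_sum]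
  have hpk_total : ∑ k, pk k = 1 := by
    simp only [hpk, ← sum_div, hnk, ← Nat.cast_sum, sum_card_filter_eq_card, Fintype.card_fin,
      div_self hn]
  have hsupport : ∀ k, support (pkj k) = support fun j => #{i | h i = k ∧ s i = j} := fun k => by
    ext j
    simp [hpkj, hnkj, hn]
  rw [hUc, sub_left_inj, ← hpk_total, pure_iff_subsingleton_support_card_filter]
  simp only [hpk_sum]
  rw [sum_eq_sum_iff_of_le fun k _ => sum_mul_sum_div_sum_sq_le (hpkj_nonneg k)]
  simp only [mem_univ, true_implies, sum_mul_sum_div_sum_sq_eq_sum_iff (hpkj_nonneg _), hsupport]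

/-- The category utility function attains its maximal value
`1 − Σ_j (p_{+j})²` if and only if every cluster of `h` is pure with respect to `s`,
i.e., `h i = h i'` implies `s i = s i'`. -/
theorem category_utility_max_iff_pure_clusters
    (n' K K' : ℕ) (hn' : 0 < n') (hK : 0 < K) (hK' : 0 < K')
    (s : Fin n' → Fin K') (h : Fin n' → Fin K) (hsurj : Function.Surjective h)
    (nkj : Fin K → Fin K' → ℕ)
    (hnkj : ∀ k j, nkj k j = (Finset.univ.filter (fun i => h i = k ∧ s i = j)).card)
    (nk : Fin K → ℕ)
    (hnk : ∀ k, nk k = (Finset.univ.filter (fun i => h i = k)).card)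
    (nj : Fin K' → ℕ)
    (hnj : ∀ j, nj j = (Finset.univ.filter (fun i => s i = j)).card)
    (pkj : Fin K → Fin K' → ℝ)
    (hpkj : ∀ k j, pkj k j = (nkj k j : ℝ) / (n' : ℝ))
    (pk : Fin K → ℝ)
    (hpk : ∀ k, pk k = (nk k : ℝ) / (n' : ℝ))
    (pj : Fin K' → ℝ)
    (hpj : ∀ j, pj j = (nj j : ℝ) / (n' : ℝ))
    (Uc : ℝ)
    (hUc : Uc = (∑ k, pk k * ∑ j, (pkj k j / pk k) ^ 2) - ∑ j, (pj j) ^ 2) :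
    Uc = 1 - ∑ j, (pj j) ^ 2 ↔ ∀ i i' : Fin n', h i = h i' → s i = s i' :=
  category_utility_max_iff_pure_clusters_general n' K K' hn' s h nkj hnkj nk hnk pkj hpkj pk hpk pj
    Uc hUc
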